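/- arXiv:2505.16638 — 8 statements merged into one kernel-verified Lean document; each statement's English description precedes it below -/
import Mathlib

section
/- Let P_A and P_B be probability distributions (densities) of predictions in [0,1] for groups A and B. Suppose P_A(v) ≥ P_B(v) for all v in [0,0.5) and P_B(v) ≥ P_A(v) for all v in [0.5,1]. Then the disparate impact DI = P_B([0.5,1]) − P_A([0.5,1]) is at least the difference in means DBR = E_{P_B}[V] − E_{P_A}[V]. -/
open Finset

/-- If the prediction distribution of group B dominates that of group A above the
0.5 threshold and vice versa below, then the disparate impact is at least the
difference in base rates (means). -/
theorem di_ge_dbr (s : Finset ℝ) (PA PB : ℝ → ℝ)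
    (hs : ∀ v ∈ s, 0 ≤ v ∧ v ≤ 1)
    (hPA0 : ∀ v ∈ s, 0 ≤ PA v) (hPB0 : ∀ v ∈ s, 0 ≤ PB v)
    (hPA1 : ∑ v ∈ s, PA v = 1) (hPB1 : ∑ v ∈ s, PB v = 1)
    (hlow : ∀ v ∈ s, v < 1/2 → PB v ≤ PA v)
    (hhigh : ∀ v ∈ s, 1/2 ≤ v → PA v ≤ PB v) :
    (∑ v ∈ s.filter (fun v => 1/2 ≤ v), PB v)
      - (∑ v ∈ s.filter (fun v => 1/2 ≤ v), PA v)
    ≥ (∑ v ∈ s, PB v * v) - (∑ v ∈ s, PA v * v) := by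
  rw [Finset.sum_filter, Finset.sum_filter, ge_iff_le, sub_le_sub_iff]
  rw [← Finset.sum_add_distrib, ← Finset.sum_add_distrib]
  apply Finset.sum_le_sum
  intro v hv
  obtain ⟨h0, h1⟩ := hs v hv
  by_cases h : (1:ℝ)/2 ≤ v
  · simp only [h, if_true]
    have := hhigh v hv h
    nlinarith
  · simp only [h, if_false]
    have := hlow v hv (lt_of_not_ge h)
    nlinarith
end

section
/- Let P_A, P_B be probability distributions on a finite subset of [0,1]. If ∫_{[0.5,1]} P_B(v)(1−v) dv ≥ ∫_{[0.5,1]} P_A(v)(1−v) dv and ∫_{[0,0.5)} P_A(v)·v dv ≥ ∫_{[0,0.5)} P_B(v)·v dv, then P_B([0.5,1]) − P_A([0.5,1]) ≥ E_{P_B}[V] − E_{P_A}[V]. -/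
open Finset

/-- Relaxed-assumption version: if the mass-weighted distances to the threshold
satisfy the two inequalities, then disparate impact is at least the base rate
difference. -/
theorem di_ge_dbr_relaxed (s : Finset ℝ) (PA PB : ℝ → ℝ)
    (hs : ∀ v ∈ s, 0 ≤ v ∧ v ≤ 1)
    (hPA0 : ∀ v ∈ s, 0 ≤ PA v) (hPB0 : ∀ v ∈ s, 0 ≤ PB v)
    (hPA1 : ∑ v ∈ s, PA v = 1) (hPB1 : ∑ v ∈ s, PB v = 1)
    (hhigh : ∑ v ∈ s.filter (fun v => 1/2 ≤ v), PB v * (1 - v)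
      ≥ ∑ v ∈ s.filter (fun v => 1/2 ≤ v), PA v * (1 - v))
    (hlow : ∑ v ∈ s.filter (fun v => v < 1/2), PA v * v
      ≥ ∑ v ∈ s.filter (fun v => v < 1/2), PB v * v) :
    (∑ v ∈ s.filter (fun v => 1/2 ≤ v), PB v)
      - (∑ v ∈ s.filter (fun v => 1/2 ≤ v), PA v)
    ≥ (∑ v ∈ s, PB v * v) - (∑ v ∈ s, PA v * v) := by
  have hsplit : ∀ P : ℝ → ℝ, ∑ v ∈ s, P v * v
      = ∑ v ∈ s.filter (fun v => 1/2 ≤ v), P v * v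
        + ∑ v ∈ s.filter (fun v => v < 1/2), P v * v := by
    intro P
    rw [← Finset.sum_filter_add_sum_filter_not s (fun v => 1/2 ≤ v)]
    congr 1
    apply Finset.sum_congr _ (fun _ _ => rfl)
    ext v; simp [not_le]
  have hhigh' : ∀ P : ℝ → ℝ, ∑ v ∈ s.filter (fun v => 1/2 ≤ v), P v * v
      = (∑ v ∈ s.filter (fun v => 1/2 ≤ v), P v)
        - ∑ v ∈ s.filter (fun v => 1/2 ≤ v), P v * (1 - v) := by
    intro P
    rw [← Finset.sum_sub_distrib]
    apply Finset.sum_congr rfl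
    intro v _; ring
  have h1 := hsplit PA
  have h2 := hsplit PB
  have h3 := hhigh' PA
  have h4 := hhigh' PB
  linarith
end

section
/- Let 𝒳 be finite with measure μ, p: 𝒳 → [0,1], and B a Bayes-optimal classifier. Suppose |p(x) − 0.5| ≥ c > 0 for all x ∈ 𝒳. Then for any classifier F with Acc(F) ≥ Acc(B) − ε, the disagreement d(F,B) := μ({x : F(x) ≠ B(x)}) satisfies d(F,B) ≤ ε/(2c). -/
open Finset

/-- If all conditional probabilities are at least c away from 1/2, then any
classifier whose accuracy is within ε of the Bayes-optimal classifier B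
disagrees with B on mass at most ε/(2c). -/
theorem multiplicity_bound_margin {𝒳 : Type*} [Fintype 𝒳]
    (μ p : 𝒳 → ℝ) (hμ : ∀ x, 0 ≤ μ x) (hμ1 : ∑ x, μ x = 1)
    (hp : ∀ x, 0 ≤ p x ∧ p x ≤ 1)
    (c ε : ℝ) (hc : 0 < c) (hε : 0 ≤ ε)
    (hsep : ∀ x, c ≤ |p x - 1/2|)
    (B F : 𝒳 → Bool)
    (hB : ∀ x, B x = true ↔ 1/2 < p x)
    (hF : (∑ x, μ x * (if F x then p x else 1 - p x))
      ≥ (∑ x, μ x * (if B x then p x else 1 - p x)) - ε) :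
    (∑ x ∈ univ.filter (fun x => F x ≠ B x), μ x) ≤ ε / (2 * c) := by
  have key : (2 * c) * ∑ x ∈ univ.filter (fun x => F x ≠ B x), μ x ≤ ε := by
    have h1 : (2 * c) * ∑ x ∈ univ.filter (fun x => F x ≠ B x), μ x
        ≤ ∑ x, μ x * ((if B x then p x else 1 - p x) - (if F x then p x else 1 - p x)) := by
      rw [Finset.mul_sum]
      rw [← Finset.sum_filter_add_sum_filter_not univ (fun x => F x ≠ B x)
        (fun x => μ x * ((if B x then p x else 1 - p x) - (if F x then p x else 1 - p x)))]
      have h2 : ∀ x ∈ univ.filter (fun x => F x ≠ B x),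
          2 * c * μ x ≤ μ x * ((if B x then p x else 1 - p x) - (if F x then p x else 1 - p x)) := by
        intro x hx
        simp only [mem_filter, ne_eq] at hx
        have hne := hx.2
        have := hsep x
        rcases lt_trichotomy (p x) (1/2) with h | h | h
        · have hBx : B x = false := by
            rw [Bool.eq_false_iff]
            intro h'; exact absurd ((hB x).mp h') (by linarith)
          have hFx : F x = true := by
            rw [hBx] at hne; simpa using hne
          rw [hBx, hFx]
          norm_num
          have habs : c ≤ 1/2 - p x := by
            have := hsep x; rw [abs_of_neg (by linarith)] at this; linarith
          have := hμ x
          nlinarith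
        · exfalso; have := hsep x; rw [show p x - 1/2 = 0 by linarith, abs_zero] at this; linarith
        · have hBx : B x = true := (hB x).mpr (by linarith)
          have hFx : F x = false := by
            rw [hBx] at hne
            rw [Bool.eq_false_iff]; exact hne
          rw [hBx, hFx]
          norm_num
          have habs : c ≤ p x - 1/2 := by
            have := hsep x; rw [abs_of_pos (by linarith)] at this; linarith
          have := hμ x
          nlinarith
      have h3 : (0:ℝ) ≤ ∑ x ∈ univ.filter (fun x => ¬ F x ≠ B x),
          μ x * ((if B x then p x else 1 - p x) - (if F x then p x else 1 - p x)) := by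
        apply Finset.sum_nonneg
        intro x hx
        simp only [mem_filter, ne_eq, not_not] at hx
        rw [hx.2]
        simp
      calc ∑ x ∈ univ.filter (fun x => F x ≠ B x), 2 * c * μ x
          ≤ ∑ x ∈ univ.filter (fun x => F x ≠ B x),
            μ x * ((if B x then p x else 1 - p x) - (if F x then p x else 1 - p x)) :=
            Finset.sum_le_sum h2
        _ ≤ _ := le_add_of_nonneg_right h3
    have h4 : ∑ x, μ x * ((if B x then p x else 1 - p x) - (if F x then p x else 1 - p x)) ≤ ε := by
      simp only [mul_sub]
      rw [Finset.sum_sub_distrib]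
      linarith [hF]
    linarith
  have h2c : (0:ℝ) < 2 * c := by linarith
  exact (le_div_iff₀' h2c).mpr key
end

section
/- Let Λ := {|p(x) − 0.5| : x ∈ 𝒳}, m(λ) := μ({x : |p(x)−0.5| = λ}), e(λ) := Σ_{λ'∈Λ, λ'<λ} 2λ'·m(λ'), and λ_ε := max{λ ∈ Λ : e(λ) ≤ ε}. Assume λ_ε > 0. Then every classifier F with Acc(F) ≥ Acc(B) − ε satisfies d(F,B) ≤ (ε − e(λ_ε))/(2λ_ε) + Σ_{λ∈Λ, λ<λ_ε} m(λ). -/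
open Finset

/-- Tight upper bound on model multiplicity: any classifier F within ε accuracy of
the Bayes-optimal classifier B disagrees with B on mass at most
(ε - e(λ_ε))/(2λ_ε) + Σ_{λ < λ_ε} m(λ). -/
theorem multiplicity_upper_bound {𝒳 : Type*} [Fintype 𝒳]
    (μ p : 𝒳 → ℝ) (hμ : ∀ x, 0 ≤ μ x) (hμ1 : ∑ x, μ x = 1)
    (hp : ∀ x, 0 ≤ p x ∧ p x ≤ 1)
    (B F : 𝒳 → Bool)
    (hB : ∀ x, p x ≠ 1/2 → (B x = true ↔ 1/2 ≤ p x))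
    (ε : ℝ) (hε : 0 ≤ ε)
    (m e : ℝ → ℝ)
    (hm : ∀ l, m l = ∑ x ∈ univ.filter (fun x => |p x - 1/2| = l), μ x)
    (he : ∀ l, e l =
      ∑ l' ∈ ((univ.image fun x => |p x - 1/2|).filter (fun l' => l' < l)),
        2 * l' * m l')
    (lε : ℝ)
    (hlΛ : lε ∈ (univ.image fun x => |p x - 1/2|))
    (hle : e lε ≤ ε)
    (hmax : ∀ l ∈ (univ.image fun x => |p x - 1/2|), e l ≤ ε → l ≤ lε)
    (hlpos : 0 < lε)
    (hF : (∑ x, μ x * (if F x then p x else 1 - p x))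
      ≥ (∑ x, μ x * (if B x then p x else 1 - p x)) - ε) :
    (∑ x ∈ univ.filter (fun x => F x ≠ B x), μ x)
      ≤ (ε - e lε) / (2 * lε)
        + ∑ l ∈ (univ.image fun x => |p x - 1/2|).filter (fun l => l < lε), m l := by
  classical
  -- Step 1: the disagreement weighted by 2|p-1/2| is at most ε
  have hkey : ∀ x, μ x * (if B x then p x else 1 - p x)
      - μ x * (if F x then p x else 1 - p x)
      = if F x ≠ B x then μ x * (2 * |p x - 1/2|) else 0 := by
    intro x
    by_cases hfb : F x = B x
    · simp [hfb]
    · rw [if_pos hfb]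
      by_cases hp2 : p x = 1/2
      · have : |p x - 1/2| = 0 := by rw [hp2]; simp
        rw [this, hp2]
        cases hB' : B x <;> cases hF' : F x <;>
          simp only [if_true, Bool.false_eq_true, if_false] <;> ring
      · cases hB' : B x
        · have hFx : F x = true := by
            cases hF' : F x
            · exact absurd (hF' ▸ hB' ▸ rfl) hfb
            · rfl
          have hlt : p x < 1/2 := by
            by_contra h
            have := (hB x hp2).mpr (not_lt.1 h)
            rw [hB'] at this; exact Bool.false_ne_true this
          have : |p x - 1/2| = -(p x - 1/2) := abs_of_neg (by linarith)
          rw [this, hFx]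
          simp only [reduceIte, Bool.false_eq_true, if_false]
          ring
        · have hFx : F x = false := by
            cases hF' : F x
            · rfl
            · exact absurd (hF' ▸ hB' ▸ rfl) hfb
          have hge : 1/2 ≤ p x := (hB x hp2).mp hB'
          have : |p x - 1/2| = p x - 1/2 := abs_of_nonneg (by linarith)
          rw [this, hFx]
          simp only [reduceIte, Bool.false_eq_true, if_false]
          ring
  have hD : ∑ x ∈ univ.filter (fun x => F x ≠ B x), μ x * (2 * |p x - 1/2|) ≤ ε := by
    have h1 : ∑ x, (μ x * (if B x then p x else 1 - p x)
        - μ x * (if F x then p x else 1 - p x)) ≤ ε := by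
      rw [Finset.sum_sub_distrib]
      linarith [hF]
    calc ∑ x ∈ univ.filter (fun x => F x ≠ B x), μ x * (2 * |p x - 1/2|)
        = ∑ x, if F x ≠ B x then μ x * (2 * |p x - 1/2|) else 0 :=
          Finset.sum_filter _ _
      _ = ∑ x, (μ x * (if B x then p x else 1 - p x)
          - μ x * (if F x then p x else 1 - p x)) := by
          exact Finset.sum_congr rfl fun x _ => (hkey x).symm
      _ ≤ ε := h1
  -- Step 2: pointwise bound
  have hx : ∀ x, μ x ≤ μ x * (2 * |p x - 1/2|) / (2 * lε)
      + (if |p x - 1/2| < lε then μ x * (1 - |p x - 1/2| / lε) else 0) := by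
    intro x
    by_cases h : |p x - 1/2| < lε
    · rw [if_pos h]
      have heq : μ x * (2 * |p x - 1/2|) / (2 * lε) = μ x * (|p x - 1/2| / lε) := by
        field_simp
      rw [heq]
      have : μ x * (|p x - 1/2| / lε) + μ x * (1 - |p x - 1/2| / lε) = μ x := by ring
      linarith
    · rw [if_neg h, add_zero]
      have hge : lε ≤ |p x - 1/2| := not_lt.1 h
      have heq : μ x * (2 * |p x - 1/2|) / (2 * lε) = μ x * (|p x - 1/2| / lε) := by
        field_simp
      rw [heq]
      have h1 : (1 : ℝ) ≤ |p x - 1/2| / lε := (one_le_div hlpos).2 hge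
      nlinarith [hμ x]
  -- Sum the pointwise bound over the disagreement set
  set S := univ.filter (fun x => F x ≠ B x) with hS
  have hsum1 : ∑ x ∈ S, μ x ≤ (∑ x ∈ S, μ x * (2 * |p x - 1/2|)) / (2 * lε)
      + ∑ x ∈ S, (if |p x - 1/2| < lε then μ x * (1 - |p x - 1/2| / lε) else 0) := by
    rw [Finset.sum_div]
    rw [← Finset.sum_add_distrib]
    exact Finset.sum_le_sum fun x _ => hx x
  have h2pos : (0 : ℝ) < 2 * lε := by linarith
  have hsum2 : (∑ x ∈ S, μ x * (2 * |p x - 1/2|)) / (2 * lε) ≤ ε / (2 * lε) :=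
    by gcongr
  have hsum3 : ∑ x ∈ S, (if |p x - 1/2| < lε then μ x * (1 - |p x - 1/2| / lε) else 0)
      ≤ ∑ x ∈ (univ : Finset 𝒳), (if |p x - 1/2| < lε then μ x * (1 - |p x - 1/2| / lε) else 0) := by
    apply Finset.sum_le_sum_of_subset_of_nonneg (Finset.filter_subset _ _)
    intro x _ _
    by_cases h : |p x - 1/2| < lε
    · rw [if_pos h]
      have : 0 ≤ 1 - |p x - 1/2| / lε := by
        have := (div_lt_one hlpos).2 h
        linarith
      exact mul_nonneg (hμ x) this
    · rw [if_neg h]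
  have hsum4 : ∑ x ∈ (univ : Finset 𝒳),
      (if |p x - 1/2| < lε then μ x * (1 - |p x - 1/2| / lε) else 0)
      = ∑ x ∈ univ.filter (fun x => |p x - 1/2| < lε), μ x * (1 - |p x - 1/2| / lε) :=
    (Finset.sum_filter _ _).symm
  -- group by fibers of |p x - 1/2|
  have hgroup : ∑ x ∈ univ.filter (fun x => |p x - 1/2| < lε), μ x * (1 - |p x - 1/2| / lε)
      = ∑ l ∈ (univ.image fun x => |p x - 1/2|).filter (fun l => l < lε),
          (1 - l / lε) * m l := by
    rw [← Finset.sum_fiberwise_of_maps_to (g := fun x => |p x - 1/2|)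
      (t := (univ.image fun x => |p x - 1/2|).filter (fun l => l < lε))
      (fun x hx => by
        simp only [Finset.mem_filter, Finset.mem_image, Finset.mem_univ, true_and] at hx ⊢
        exact ⟨⟨x, rfl⟩, hx⟩)]
    apply Finset.sum_congr rfl
    intro l hl
    simp only [Finset.mem_filter] at hl
    have hfil : (univ.filter (fun x => |p x - 1/2| < lε)).filter (fun x => |p x - 1/2| = l)
        = univ.filter (fun x => |p x - 1/2| = l) := by
      ext x
      simp only [Finset.mem_filter, Finset.mem_univ, true_and]
      constructor
      · exact fun h => h.2
      · exact fun h => ⟨h ▸ hl.2, h⟩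
    rw [hfil, hm l, Finset.mul_sum]
    apply Finset.sum_congr rfl
    intro x hx
    simp only [Finset.mem_filter] at hx
    rw [hx.2]
    ring
  -- final arithmetic
  have hfinal : ε / (2 * lε)
      + ∑ l ∈ (univ.image fun x => |p x - 1/2|).filter (fun l => l < lε), (1 - l / lε) * m l
      = (ε - e lε) / (2 * lε)
        + ∑ l ∈ (univ.image fun x => |p x - 1/2|).filter (fun l => l < lε), m l := by
    rw [he lε]
    rw [sub_div, Finset.sum_div]
    have : ∀ l ∈ (univ.image fun x => |p x - 1/2|).filter (fun l => l < lε),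
        (1 - l / lε) * m l = m l - (2 * l * m l) / (2 * lε) := by
      intro l _
      field_simp
    rw [Finset.sum_congr rfl this, Finset.sum_sub_distrib]
    ring
  calc ∑ x ∈ S, μ x
      ≤ (∑ x ∈ S, μ x * (2 * |p x - 1/2|)) / (2 * lε)
        + ∑ x ∈ S, (if |p x - 1/2| < lε then μ x * (1 - |p x - 1/2| / lε) else 0) := hsum1
    _ ≤ ε / (2 * lε)
        + ∑ l ∈ (univ.image fun x => |p x - 1/2|).filter (fun l => l < lε),
            (1 - l / lε) * m l := by
        rw [← hgroup, ← hsum4]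
        exact add_le_add hsum2 hsum3
    _ = _ := hfinal
end

section
/- With Λ, m, e, λ_ε defined as in the multiplicity bound and assuming λ_ε > 0 and m(λ_ε) > 0, the randomized classifier F_ε that flips B on all x with |p(x)−0.5| < λ_ε, flips B with probability (ε − e(λ_ε))/(2λ_ε·m(λ_ε)) on x with |p(x)−0.5| = λ_ε, and agrees with B elsewhere, satisfies: its expected accuracy equals Acc(B) − ε and its expected disagreement with B equals (ε − e(λ_ε))/(2λ_ε) + Σ_{λ<λ_ε} m(λ). -/
open Finset

/-- The randomised classifier F_ε (flipping the Bayes classifier B below λ_ε,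
flipping with probability (ε - e(λ_ε))/(2λ_ε m(λ_ε)) at λ_ε, and agreeing with B
above) has expected accuracy exactly Acc(B) - ε and expected disagreement with B
exactly (ε - e(λ_ε))/(2λ_ε) + Σ_{λ < λ_ε} m(λ). -/
theorem randomized_classifier_achieves_bound {𝒳 : Type*} [Fintype 𝒳]
    (μ p : 𝒳 → ℝ) (hμ : ∀ x, 0 ≤ μ x) (hμ1 : ∑ x, μ x = 1)
    (hp : ∀ x, 0 ≤ p x ∧ p x ≤ 1)
    (B : 𝒳 → ℝ) (hB01 : ∀ x, B x = 0 ∨ B x = 1)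
    (hB : ∀ x, (1/2 < p x → B x = 1) ∧ (p x < 1/2 → B x = 0))
    (ε : ℝ) (hε : 0 ≤ ε)
    (m e : ℝ → ℝ)
    (hm : ∀ l, m l = ∑ x ∈ univ.filter (fun x => |p x - 1/2| = l), μ x)
    (he : ∀ l, e l =
      ∑ l' ∈ ((univ.image fun x => |p x - 1/2|).filter (fun l' => l' < l)),
        2 * l' * m l')
    (lε : ℝ)
    (hlΛ : lε ∈ (univ.image fun x => |p x - 1/2|))
    (hle : e lε ≤ ε)
    (hmax : ∀ l ∈ (univ.image fun x => |p x - 1/2|), e l ≤ ε → l ≤ lε)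
    (hlpos : 0 < lε) (hmpos : 0 < m lε)
    (hub : ε - e lε ≤ 2 * lε * m lε)
    (Fε : 𝒳 → ℝ)
    (hFε : ∀ x,
      (|p x - 1/2| < lε → Fε x = 1 - B x) ∧
      (|p x - 1/2| = lε →
        Fε x = (1 - (ε - e lε) / (2 * lε * m lε)) * B x
          + ((ε - e lε) / (2 * lε * m lε)) * (1 - B x)) ∧
      (lε < |p x - 1/2| → Fε x = B x)) :
    (∑ x, μ x * (Fε x * p x + (1 - Fε x) * (1 - p x)))
      = (∑ x, μ x * (B x * p x + (1 - B x) * (1 - p x))) - ε ∧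
    (∑ x, μ x * |Fε x - B x|)
      = (ε - e lε) / (2 * lε)
        + ∑ l ∈ (univ.image fun x => |p x - 1/2|).filter (fun l => l < lε), m l := by
  classical
  have hq0 : 0 ≤ (ε - e lε) / (2 * lε * m lε) :=
    div_nonneg (by linarith) (by positivity)
  have hden : (2 * lε * m lε) ≠ 0 := by positivity
  set q : ℝ := (ε - e lε) / (2 * lε * m lε) with hqdef
  have hqe : q * (2 * lε * m lε) = ε - e lε := div_mul_cancel₀ _ hden
  -- key pointwise sign identity
  have hkey : ∀ x, (2 * B x - 1) * (2 * p x - 1) = 2 * |p x - 1/2| := by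
    intro x
    rcases lt_trichotomy (p x) (1/2) with h | h | h
    · rw [(hB x).2 h, abs_of_neg (by linarith : p x - 1/2 < 0)]; ring
    · rw [h]; norm_num
    · rw [(hB x).1 h, abs_of_pos (by linarith : 0 < p x - 1/2)]; ring
  -- three-way split of any sum
  have hsplit : ∀ g : 𝒳 → ℝ, (∑ x, g x)
      = (∑ x ∈ univ.filter (fun x => |p x - 1/2| < lε), g x)
        + ((∑ x ∈ univ.filter (fun x => |p x - 1/2| = lε), g x)
        + (∑ x ∈ univ.filter (fun x => lε < |p x - 1/2|), g x)) := by
    intro g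
    rw [← Finset.sum_filter_add_sum_filter_not univ (fun x => |p x - 1/2| < lε) g]
    congr 1
    rw [← Finset.sum_filter_add_sum_filter_not
      (univ.filter (fun x => ¬ |p x - 1/2| < lε)) (fun x => |p x - 1/2| = lε) g]
    congr 1
    · apply Finset.sum_congr _ (fun x _ => rfl)
      rw [Finset.filter_filter]
      ext x
      simp only [Finset.mem_filter, Finset.mem_univ, true_and]
      constructor
      · exact fun h => h.2
      · intro h; exact ⟨by rw [h]; exact lt_irrefl _, h⟩
    · apply Finset.sum_congr _ (fun x _ => rfl)
      rw [Finset.filter_filter]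
      ext x
      simp only [Finset.mem_filter, Finset.mem_univ, true_and]
      constructor
      · intro h; exact lt_of_le_of_ne (not_lt.1 h.1) (Ne.symm h.2)
      · intro h; exact ⟨not_lt.2 h.le, ne_of_gt h⟩
  -- grouping lemma
  have hgroup : ∀ g : ℝ → ℝ,
      (∑ l ∈ (univ.image fun x => |p x - 1/2|).filter (fun l => l < lε),
        g l * ∑ x ∈ univ.filter (fun x => |p x - 1/2| = l), μ x)
      = ∑ x ∈ univ.filter (fun x => |p x - 1/2| < lε), g (|p x - 1/2|) * μ x := by
    intro g
    calc (∑ l ∈ (univ.image fun x => |p x - 1/2|).filter (fun l => l < lε),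
          g l * ∑ x ∈ univ.filter (fun x => |p x - 1/2| = l), μ x)
        = ∑ l ∈ (univ.image fun x => |p x - 1/2|).filter (fun l => l < lε),
            ∑ x ∈ univ.filter (fun x => |p x - 1/2| = l), g (|p x - 1/2|) * μ x := by
          refine Finset.sum_congr rfl fun l _ => ?_
          rw [Finset.mul_sum]
          refine Finset.sum_congr rfl fun x hx => ?_
          rw [(Finset.mem_filter.1 hx).2]
      _ = ∑ x ∈ univ.filter (fun x =>
            |p x - 1/2| ∈ (univ.image fun y => |p y - 1/2|).filter (fun l => l < lε)),
            g (|p x - 1/2|) * μ x :=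
          Finset.sum_fiberwise_eq_sum_filter _ _ _ _
      _ = ∑ x ∈ univ.filter (fun x => |p x - 1/2| < lε), g (|p x - 1/2|) * μ x := by
          apply Finset.sum_congr _ (fun x _ => rfl)
          ext x
          simp only [Finset.mem_filter, Finset.mem_univ, true_and]
          constructor
          · exact fun h => h.2
          · exact fun h => ⟨Finset.mem_image_of_mem _ (Finset.mem_univ x), h⟩
  have hE : e lε = ∑ x ∈ univ.filter (fun x => |p x - 1/2| < lε), 2 * |p x - 1/2| * μ x := by
    rw [he lε]
    calc (∑ l' ∈ (univ.image fun x => |p x - 1/2|).filter (fun l' => l' < lε), 2 * l' * m l')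
        = ∑ l' ∈ (univ.image fun x => |p x - 1/2|).filter (fun l' => l' < lε),
            (2 * l') * ∑ x ∈ univ.filter (fun x => |p x - 1/2| = l'), μ x := by
          refine Finset.sum_congr rfl fun l' _ => ?_; rw [hm l']
      _ = ∑ x ∈ univ.filter (fun x => |p x - 1/2| < lε), 2 * |p x - 1/2| * μ x :=
          hgroup (fun l => 2 * l)
  have hM : (∑ l ∈ (univ.image fun x => |p x - 1/2|).filter (fun l => l < lε), m l)
      = ∑ x ∈ univ.filter (fun x => |p x - 1/2| < lε), μ x := by
    calc (∑ l ∈ (univ.image fun x => |p x - 1/2|).filter (fun l => l < lε), m l)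
        = ∑ l ∈ (univ.image fun x => |p x - 1/2|).filter (fun l => l < lε),
            (1 : ℝ) * ∑ x ∈ univ.filter (fun x => |p x - 1/2| = l), μ x := by
          refine Finset.sum_congr rfl fun l _ => ?_; rw [hm l, one_mul]
      _ = ∑ x ∈ univ.filter (fun x => |p x - 1/2| < lε), (1 : ℝ) * μ x := hgroup (fun _ => 1)
      _ = _ := by simp
  have hmlε : m lε = ∑ x ∈ univ.filter (fun x => |p x - 1/2| = lε), μ x := hm lε
  constructor
  · -- accuracy
    have key : ∀ x, μ x * (Fε x * p x + (1 - Fε x) * (1 - p x))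
        = μ x * (B x * p x + (1 - B x) * (1 - p x))
          - (if |p x - 1/2| < lε then 2 * |p x - 1/2| * μ x
             else if |p x - 1/2| = lε then q * (2 * lε) * μ x else 0) := by
      intro x
      rcases lt_trichotomy (|p x - 1/2|) lε with h | h | h
      · rw [if_pos h, (hFε x).1 h]
        linear_combination (-(μ x)) * hkey x
      · rw [if_neg (by rw [h]; exact lt_irrefl _), if_pos h, (hFε x).2.1 h]
        linear_combination (-(μ x) * q) * hkey x - (2 * μ x * q) * h
      · rw [if_neg (asymm h), if_neg (ne_of_gt h), (hFε x).2.2 h]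
        ring
    rw [Finset.sum_congr rfl (fun x _ => key x), Finset.sum_sub_distrib]
    congr 1
    rw [hsplit (fun x => if |p x - 1/2| < lε then 2 * |p x - 1/2| * μ x
             else if |p x - 1/2| = lε then q * (2 * lε) * μ x else 0)]
    have s1 : (∑ x ∈ univ.filter (fun x => |p x - 1/2| < lε),
        (if |p x - 1/2| < lε then 2 * |p x - 1/2| * μ x
             else if |p x - 1/2| = lε then q * (2 * lε) * μ x else 0)) = e lε := by
      rw [hE]
      refine Finset.sum_congr rfl fun x hx => ?_
      rw [if_pos (Finset.mem_filter.1 hx).2]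
    have s2 : (∑ x ∈ univ.filter (fun x => |p x - 1/2| = lε),
        (if |p x - 1/2| < lε then 2 * |p x - 1/2| * μ x
             else if |p x - 1/2| = lε then q * (2 * lε) * μ x else 0)) = ε - e lε := by
      have : ∀ x ∈ univ.filter (fun x => |p x - 1/2| = lε),
          (if |p x - 1/2| < lε then 2 * |p x - 1/2| * μ x
             else if |p x - 1/2| = lε then q * (2 * lε) * μ x else 0) = q * (2 * lε) * μ x := by
        intro x hx
        have h := (Finset.mem_filter.1 hx).2
        rw [if_neg (by rw [h]; exact lt_irrefl _), if_pos h]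
      rw [Finset.sum_congr rfl this, ← Finset.mul_sum, ← hmlε]
      linear_combination hqe
    have s3 : (∑ x ∈ univ.filter (fun x => lε < |p x - 1/2|),
        (if |p x - 1/2| < lε then 2 * |p x - 1/2| * μ x
             else if |p x - 1/2| = lε then q * (2 * lε) * μ x else 0)) = 0 := by
      refine Finset.sum_eq_zero fun x hx => ?_
      have h := (Finset.mem_filter.1 hx).2
      rw [if_neg (asymm h), if_neg (ne_of_gt h)]
    rw [s1, s2, s3]
    ring
  · -- disagreement
    have key : ∀ x, μ x * |Fε x - B x|
        = (if |p x - 1/2| < lε then μ x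
           else if |p x - 1/2| = lε then q * μ x else 0) := by
      intro x
      rcases lt_trichotomy (|p x - 1/2|) lε with h | h | h
      · rw [if_pos h, (hFε x).1 h]
        rcases hB01 x with hb | hb <;> rw [hb] <;> norm_num
      · rw [if_neg (by rw [h]; exact lt_irrefl _), if_pos h, (hFε x).2.1 h]
        rcases hB01 x with hb | hb <;> rw [hb]
        · rw [show (1 - q) * 0 + q * (1 - 0) - 0 = q by ring, abs_of_nonneg hq0]; ring
        · rw [show (1 - q) * 1 + q * (1 - 1) - 1 = -q by ring, abs_neg, abs_of_nonneg hq0]; ring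
      · rw [if_neg (asymm h), if_neg (ne_of_gt h), (hFε x).2.2 h]
        simp
    rw [Finset.sum_congr rfl (fun x _ => key x),
      hsplit (fun x => if |p x - 1/2| < lε then μ x
           else if |p x - 1/2| = lε then q * μ x else 0)]
    have s1 : (∑ x ∈ univ.filter (fun x => |p x - 1/2| < lε),
        (if |p x - 1/2| < lε then μ x
           else if |p x - 1/2| = lε then q * μ x else 0))
        = ∑ l ∈ (univ.image fun x => |p x - 1/2|).filter (fun l => l < lε), m l := by
      rw [hM]
      refine Finset.sum_congr rfl fun x hx => ?_
      rw [if_pos (Finset.mem_filter.1 hx).2]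
    have s2 : (∑ x ∈ univ.filter (fun x => |p x - 1/2| = lε),
        (if |p x - 1/2| < lε then μ x
           else if |p x - 1/2| = lε then q * μ x else 0)) = (ε - e lε) / (2 * lε) := by
      have : ∀ x ∈ univ.filter (fun x => |p x - 1/2| = lε),
          (if |p x - 1/2| < lε then μ x
           else if |p x - 1/2| = lε then q * μ x else 0) = q * μ x := by
        intro x hx
        have h := (Finset.mem_filter.1 hx).2
        rw [if_neg (by rw [h]; exact lt_irrefl _), if_pos h]
      rw [Finset.sum_congr rfl this, ← Finset.mul_sum, ← hmlε, hqdef]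
      field_simp
    have s3 : (∑ x ∈ univ.filter (fun x => lε < |p x - 1/2|),
        (if |p x - 1/2| < lε then μ x
           else if |p x - 1/2| = lε then q * μ x else 0)) = 0 := by
      refine Finset.sum_eq_zero fun x hx => ?_
      have h := (Finset.mem_filter.1 hx).2
      rw [if_neg (asymm h), if_neg (ne_of_gt h)]
    rw [s1, s2, s3]
    ring
end

section
/- If F is in the ε-Rashomon set of B and G is in the δ-Rashomon set of B, then the disagreement d(F,G) is at most the maximum disagreement with B over the (ε+δ)-Rashomon set: d(F,G) ≤ max_{H: Acc(H) ≥ Acc(B)−ε−δ} d(H,B). -/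
open Finset

/-- Multiplicity bound for non-optimal models: if F is in the ε-Rashomon set and
G in the δ-Rashomon set of the Bayes classifier B, then their disagreement is at
most the maximal disagreement with B over the (ε+δ)-Rashomon set (stated as the
existence of a witness H in that set). -/
theorem multiplicity_nonoptimal {𝒳 : Type*} [Fintype 𝒳]
    (μ p : 𝒳 → ℝ) (hμ : ∀ x, 0 ≤ μ x) (hμ1 : ∑ x, μ x = 1)
    (hp : ∀ x, 0 ≤ p x ∧ p x ≤ 1)
    (B F G : 𝒳 → Bool)
    (hB : ∀ x, p x ≠ 1/2 → (B x = true ↔ 1/2 ≤ p x))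
    (ε δ : ℝ)
    (hF : (∑ x, μ x * (if F x then p x else 1 - p x))
      ≥ (∑ x, μ x * (if B x then p x else 1 - p x)) - ε)
    (hG : (∑ x, μ x * (if G x then p x else 1 - p x))
      ≥ (∑ x, μ x * (if B x then p x else 1 - p x)) - δ) :
    ∃ H : 𝒳 → Bool,
      (∑ x, μ x * (if H x then p x else 1 - p x))
        ≥ (∑ x, μ x * (if B x then p x else 1 - p x)) - (ε + δ) ∧
      (∑ x ∈ univ.filter (fun x => F x ≠ G x), μ x)
        ≤ (∑ x ∈ univ.filter (fun x => H x ≠ B x), μ x) := by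
  classical
  have hopt : ∀ x (b : Bool),
      (if b then p x else 1 - p x) ≤ (if B x then p x else 1 - p x) := by
    intro x b
    rcases eq_or_ne (p x) (1/2) with h | h
    · cases b <;> cases hBx : B x <;> simp [h] <;> linarith
    · rcases lt_or_ge (p x) (1/2) with hlt | hle
      · have hBf : B x = false := by
          cases hBx : B x
          · rfl
          · exact absurd ((hB x h).mp hBx) (not_le.mpr hlt)
        cases b <;> simp [hBf] <;> linarith
      · have hBt : B x = true := (hB x h).mpr hle
        cases b <;> simp [hBt] <;> linarith
  refine ⟨fun x => if F x ≠ G x then !B x else B x, ?_, ?_⟩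
  · have key : ∀ x ∈ univ,
        μ x * ((if B x then p x else 1 - p x)
          - (if (if F x ≠ G x then !B x else B x) then p x else 1 - p x))
        ≤ μ x * ((if B x then p x else 1 - p x) - (if F x then p x else 1 - p x))
        + μ x * ((if B x then p x else 1 - p x) - (if G x then p x else 1 - p x)) := by
      intro x _
      by_cases hfg : F x = G x
      · have hH : (if F x ≠ G x then !B x else B x) = B x := by simp [hfg]
        rw [hH, hfg]
        have h1 := hopt x (G x)
        have h2 := hμ x
        nlinarith
      · have hH : (if F x ≠ G x then !B x else B x) = !B x := by simp [hfg]
        rw [hH]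
        have hcase : F x = !B x ∨ G x = !B x := by
          cases hFx : F x <;> cases hGx : G x <;> cases hBx : B x <;> simp_all
        rcases hcase with h | h
        · rw [← h]
          have h1 := hopt x (G x)
          have h2 := hμ x
          nlinarith
        · rw [← h]
          have h1 := hopt x (F x)
          have h2 := hμ x
          nlinarith
    have hsum := Finset.sum_le_sum key
    simp only [mul_sub] at hsum
    rw [Finset.sum_sub_distrib, Finset.sum_add_distrib, Finset.sum_sub_distrib,
      Finset.sum_sub_distrib] at hsum
    linarith
  · apply le_of_eq
    apply Finset.sum_congr
    · ext x
      simp only [Finset.mem_filter, Finset.mem_univ, true_and]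
      by_cases hfg : F x = G x
      · simp [hfg]
      · simp [hfg]
    · intros; rfl
end

section
/- Let {𝒜, ℬ} be a partition of 𝒳 with both parts having positive measure. For any two classifiers F, G, the difference in their disparate impacts satisfies |DI(F) − DI(G)| ≤ d(F,G) / min(μ(𝒜), μ(ℬ)). -/
open Finset

lemma filter_sum_diff_le {𝒳 : Type*} [Fintype 𝒳] [DecidableEq 𝒳]
    (μ : 𝒳 → ℝ) (hμ : ∀ x, 0 ≤ μ x) (s : Finset 𝒳) (F G : 𝒳 → Bool) :
    |(∑ x ∈ s.filter (fun x => F x = true), μ x)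
      - (∑ x ∈ s.filter (fun x => G x = true), μ x)|
    ≤ ∑ x ∈ s.filter (fun x => F x ≠ G x), μ x := by
  rw [Finset.sum_filter, Finset.sum_filter, Finset.sum_filter, ← Finset.sum_sub_distrib]
  refine (Finset.abs_sum_le_sum_abs _ _).trans (Finset.sum_le_sum fun x _ => ?_)
  by_cases hF : F x = true <;> by_cases hG : G x = true <;>
    simp [hF, hG, abs_of_nonneg (hμ x), hμ x]

/-- The difference in disparate impact of two classifiers is bounded by their
disagreement divided by the measure of the smaller group. -/
theorem di_diff_le_disagreement_div_min {𝒳 : Type*} [Fintype 𝒳] [DecidableEq 𝒳]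
    (μ : 𝒳 → ℝ) (hμ : ∀ x, 0 ≤ μ x) (hμ1 : ∑ x, μ x = 1)
    (ℬ : Finset 𝒳)
    (hA : 0 < ∑ x ∈ ℬᶜ, μ x) (hB : 0 < ∑ x ∈ ℬ, μ x)
    (F G : 𝒳 → Bool) :
    |((∑ x ∈ ℬᶜ.filter (fun x => F x = true), μ x) / (∑ x ∈ ℬᶜ, μ x)
        - (∑ x ∈ ℬ.filter (fun x => F x = true), μ x) / (∑ x ∈ ℬ, μ x))
      - ((∑ x ∈ ℬᶜ.filter (fun x => G x = true), μ x) / (∑ x ∈ ℬᶜ, μ x)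
        - (∑ x ∈ ℬ.filter (fun x => G x = true), μ x) / (∑ x ∈ ℬ, μ x))|
    ≤ (∑ x ∈ univ.filter (fun x => F x ≠ G x), μ x)
        / min (∑ x ∈ ℬᶜ, μ x) (∑ x ∈ ℬ, μ x) := by
  set a := ∑ x ∈ ℬᶜ, μ x
  set b := ∑ x ∈ ℬ, μ x
  set dA := ∑ x ∈ ℬᶜ.filter (fun x => F x ≠ G x), μ x with hdA
  set dB := ∑ x ∈ ℬ.filter (fun x => F x ≠ G x), μ x with hdB
  have hm : 0 < min a b := lt_min hA hB
  have hdA0 : 0 ≤ dA := Finset.sum_nonneg fun x _ => hμ x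
  have hdB0 : 0 ≤ dB := Finset.sum_nonneg fun x _ => hμ x
  have hsplit : (∑ x ∈ univ.filter (fun x => F x ≠ G x), μ x) = dB + dA := by
    rw [hdA, hdB, Finset.sum_filter, Finset.sum_filter, Finset.sum_filter,
      Finset.sum_add_sum_compl]
  rw [hsplit]
  have h1 := filter_sum_diff_le μ hμ ℬᶜ F G
  have h2 := filter_sum_diff_le μ hμ ℬ F G
  calc |_| ≤ |(∑ x ∈ ℬᶜ.filter (fun x => F x = true), μ x) / a
              - (∑ x ∈ ℬᶜ.filter (fun x => G x = true), μ x) / a|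
           + |(∑ x ∈ ℬ.filter (fun x => F x = true), μ x) / b
              - (∑ x ∈ ℬ.filter (fun x => G x = true), μ x) / b| := by
        rw [show ((∑ x ∈ ℬᶜ.filter (fun x => F x = true), μ x) / a
            - (∑ x ∈ ℬ.filter (fun x => F x = true), μ x) / b)
          - ((∑ x ∈ ℬᶜ.filter (fun x => G x = true), μ x) / a
            - (∑ x ∈ ℬ.filter (fun x => G x = true), μ x) / b)
          = ((∑ x ∈ ℬᶜ.filter (fun x => F x = true), μ x) / a
              - (∑ x ∈ ℬᶜ.filter (fun x => G x = true), μ x) / a)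
            - ((∑ x ∈ ℬ.filter (fun x => F x = true), μ x) / b
              - (∑ x ∈ ℬ.filter (fun x => G x = true), μ x) / b) by ring]
        exact abs_sub _ _
    _ = |(∑ x ∈ ℬᶜ.filter (fun x => F x = true), μ x)
          - (∑ x ∈ ℬᶜ.filter (fun x => G x = true), μ x)| / a
        + |(∑ x ∈ ℬ.filter (fun x => F x = true), μ x)
          - (∑ x ∈ ℬ.filter (fun x => G x = true), μ x)| / b := by
        rw [← sub_div, ← sub_div, abs_div, abs_div, abs_of_pos hA, abs_of_pos hB]
    _ ≤ dA / a + dB / b := by gcongr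
    _ ≤ dA / min a b + dB / min a b := by gcongr <;> simp [min_le_left, min_le_right]
    _ = (dB + dA) / min a b := by rw [← add_div]; ring_nf
end

section
/- Fix a probability measure P, a partition {𝒜, ℬ}, an unaware classifier F (i.e., F(x₁)=F(x₂) whenever x₁, x₂ agree on all non-protected features), and ε > 0. Then there exists a classifier G with Acc(G) ≥ Acc(F) − ε such that |DI(F) − DI(G)| ≥ (1/(2·max(μ(𝒜),μ(ℬ)))) · max{d(H,B) : Acc(H) ≥ Acc(B) − ε}. -/
open Finset

section AuxDI

variable {𝒳 : Type*} [Fintype 𝒳] [DecidableEq 𝒳]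

/-- Accuracy of a classifier. -/
def accDI (μ p : 𝒳 → ℝ) (K : 𝒳 → Bool) : ℝ :=
  ∑ x, μ x * (if K x then p x else 1 - p x)

/-- Numerator of a selection rate. -/
def numDI (μ : 𝒳 → ℝ) (s : Finset 𝒳) (K : 𝒳 → Bool) : ℝ :=
  ∑ x ∈ s.filter (fun x => K x = true), μ x

/-- Disparate impact. -/
noncomputable def diDI (μ : 𝒳 → ℝ) (ℬ : Finset 𝒳) (K : 𝒳 → Bool) : ℝ :=
  numDI μ ℬᶜ K / (∑ x ∈ ℬᶜ, μ x) - numDI μ ℬ K / (∑ x ∈ ℬ, μ x)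

lemma bayes_pt (μ p : 𝒳 → ℝ) (hμ : ∀ x, 0 ≤ μ x)
    (B : 𝒳 → Bool) (hBayes : ∀ x, p x ≠ 1/2 → (B x = true ↔ 1/2 ≤ p x))
    (x : 𝒳) (c : Bool) :
    μ x * (if c then p x else 1 - p x) ≤ μ x * (if B x then p x else 1 - p x) := by
  apply mul_le_mul_of_nonneg_left _ (hμ x)
  by_cases hpx : p x = 1/2
  · cases c <;> cases B x <;> simp [hpx] <;> norm_num
  · have h := hBayes x hpx
    cases hc : B x
    · rw [hc] at h
      simp only [Bool.false_eq_true, false_iff, not_le] at h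
      cases c <;> simp <;> linarith
    · rw [hc] at h
      simp only [true_iff] at h
      cases c <;> simp <;> linarith

lemma bayes_opp (μ p : 𝒳 → ℝ) (hμ : ∀ x, 0 ≤ μ x)
    (B : 𝒳 → Bool) (hBayes : ∀ x, p x ≠ 1/2 → (B x = true ↔ 1/2 ≤ p x))
    (x : 𝒳) (c : Bool) :
    μ x * (if B x then 1 - p x else p x) ≤ μ x * (if c then p x else 1 - p x) := by
  apply mul_le_mul_of_nonneg_left _ (hμ x)
  by_cases hpx : p x = 1/2
  · cases c <;> cases B x <;> simp [hpx] <;> norm_num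
  · have h := hBayes x hpx
    cases hc : B x
    · rw [hc] at h
      simp only [Bool.false_eq_true, false_iff, not_le] at h
      cases c <;> simp <;> linarith
    · rw [hc] at h
      simp only [true_iff] at h
      cases c <;> simp <;> linarith

/-- Flipping a classifier only on the disagreement set of `Hs` and `B`
loses at most as much accuracy as `Hs` loses relative to `B`. -/
lemma acc_flip (μ p : 𝒳 → ℝ) (hμ : ∀ x, 0 ≤ μ x)
    (B : 𝒳 → Bool) (hBayes : ∀ x, p x ≠ 1/2 → (B x = true ↔ 1/2 ≤ p x))
    (Hs F G : 𝒳 → Bool) (hG : ∀ x, Hs x = B x → G x = F x) :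
    accDI μ p F - accDI μ p G ≤ accDI μ p B - accDI μ p Hs := by
  have key : ∀ x ∈ Finset.univ (α := 𝒳),
      μ x * (if F x then p x else 1 - p x) + μ x * (if Hs x then p x else 1 - p x)
        ≤ μ x * (if B x then p x else 1 - p x) + μ x * (if G x then p x else 1 - p x) := by
    intro x _
    by_cases hx : Hs x = B x
    · rw [hG x hx, hx]
      exact le_of_eq (by ring)
    · have hHsx : (if Hs x then p x else 1 - p x) = (if B x then 1 - p x else p x) := by
        cases hBx : B x <;> cases hHx : Hs x <;> simp_all
      rw [hHsx]
      exact add_le_add (bayes_pt μ p hμ B hBayes x (F x)) (bayes_opp μ p hμ B hBayes x (G x))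
  have := Finset.sum_le_sum key
  rw [Finset.sum_add_distrib, Finset.sum_add_distrib] at this
  unfold accDI
  linarith

end AuxDI

/-- Achievable disparate-impact change for unaware models: for any unaware
classifier F (constant on fibers of the non-protected features π) and ε > 0,
there is a classifier G within ε accuracy of F whose disparate impact differs
from that of F by at least (1/(2·max(μ(𝒜),μ(ℬ)))) times the maximal disagreement
d(H,B) over the ε-Rashomon set of the Bayes classifier B. -/
theorem unaware_achievable_di {𝒳 Feat : Type*} [Fintype 𝒳] [DecidableEq 𝒳]
    (μ p : 𝒳 → ℝ) (hμ : ∀ x, 0 ≤ μ x) (hμ1 : ∑ x, μ x = 1)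
    (hp : ∀ x, 0 ≤ p x ∧ p x ≤ 1)
    (ℬ : Finset 𝒳)
    (hA : 0 < ∑ x ∈ ℬᶜ, μ x) (hB : 0 < ∑ x ∈ ℬ, μ x)
    (B : 𝒳 → Bool) (hBayes : ∀ x, p x ≠ 1/2 → (B x = true ↔ 1/2 ≤ p x))
    (π : 𝒳 → Feat) (F : 𝒳 → Bool)
    (hunaware : ∀ x₁ x₂, π x₁ = π x₂ → F x₁ = F x₂)
    (ε : ℝ) (hε : 0 < ε) :
    ∃ G : 𝒳 → Bool,
      (∑ x, μ x * (if G x then p x else 1 - p x))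
        ≥ (∑ x, μ x * (if F x then p x else 1 - p x)) - ε ∧
      ∀ H : 𝒳 → Bool,
        (∑ x, μ x * (if H x then p x else 1 - p x))
          ≥ (∑ x, μ x * (if B x then p x else 1 - p x)) - ε →
        |((∑ x ∈ ℬᶜ.filter (fun x => F x = true), μ x) / (∑ x ∈ ℬᶜ, μ x)
            - (∑ x ∈ ℬ.filter (fun x => F x = true), μ x) / (∑ x ∈ ℬ, μ x))
          - ((∑ x ∈ ℬᶜ.filter (fun x => G x = true), μ x) / (∑ x ∈ ℬᶜ, μ x)
            - (∑ x ∈ ℬ.filter (fun x => G x = true), μ x) / (∑ x ∈ ℬ, μ x))|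
        ≥ (1 / (2 * max (∑ x ∈ ℬᶜ, μ x) (∑ x ∈ ℬ, μ x)))
            * (∑ x ∈ univ.filter (fun x => H x ≠ B x), μ x) := by
  classical
  set a := ∑ x ∈ ℬᶜ, μ x with ha
  set b := ∑ x ∈ ℬ, μ x with hb
  set M := max a b with hM
  have hM0 : 0 < M := lt_max_iff.mpr (Or.inl hA)
  -- maximizer of the disagreement over the Rashomon set
  obtain ⟨Hs, hHsmem, hHsmax⟩ :=
    Finset.exists_max_image
      (Finset.univ.filter (fun K : 𝒳 → Bool => accDI μ p B - ε ≤ accDI μ p K))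
      (fun K => ∑ x ∈ univ.filter (fun x => K x ≠ B x), μ x)
      ⟨B, by simp only [mem_filter, mem_univ, true_and]; linarith⟩
  simp only [mem_filter, mem_univ, true_and] at hHsmem hHsmax
  set D := ∑ x ∈ univ.filter (fun x => Hs x ≠ B x), μ x with hD
  -- the two candidate classifiers
  set G₁ : 𝒳 → Bool := fun x => if Hs x = B x then F x else !(decide (x ∈ ℬ)) with hG₁
  set G₂ : 𝒳 → Bool := fun x => if Hs x = B x then F x else decide (x ∈ ℬ) with hG₂
  -- accuracy of the candidates
  have haccB : accDI μ p B - accDI μ p Hs ≤ ε := by linarith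
  have hacc1 : accDI μ p F - accDI μ p G₁ ≤ ε :=
    le_trans (acc_flip μ p hμ B hBayes Hs F G₁ (fun x hx => by simp [hG₁, hx])) haccB
  have hacc2 : accDI μ p F - accDI μ p G₂ ≤ ε :=
    le_trans (acc_flip μ p hμ B hBayes Hs F G₂ (fun x hx => by simp [hG₂, hx])) haccB
  -- DI difference between the two candidates
  have hUA : numDI μ ℬᶜ G₁ - numDI μ ℬᶜ G₂
      = ∑ x ∈ ℬᶜ.filter (fun x => Hs x ≠ B x), μ x := by
    unfold numDI
    rw [sum_filter, sum_filter, sum_filter, ← Finset.sum_sub_distrib]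
    refine Finset.sum_congr rfl fun x hx => ?_
    have hxB : x ∉ ℬ := by simpa using hx
    by_cases h : Hs x = B x
    · simp [hG₁, hG₂, h]
    · simp [hG₁, hG₂, h, hxB]
  have hUB : numDI μ ℬ G₂ - numDI μ ℬ G₁
      = ∑ x ∈ ℬ.filter (fun x => Hs x ≠ B x), μ x := by
    unfold numDI
    rw [sum_filter, sum_filter, sum_filter, ← Finset.sum_sub_distrib]
    refine Finset.sum_congr rfl fun x hx => ?_
    by_cases h : Hs x = B x
    · simp [hG₁, hG₂, h]
    · simp [hG₁, hG₂, h, hx]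
  have hsplit : D = (∑ x ∈ ℬᶜ.filter (fun x => Hs x ≠ B x), μ x)
      + (∑ x ∈ ℬ.filter (fun x => Hs x ≠ B x), μ x) := by
    rw [hD, sum_filter, sum_filter, sum_filter, add_comm, Finset.sum_add_sum_compl]
  have hnnA : 0 ≤ ∑ x ∈ ℬᶜ.filter (fun x => Hs x ≠ B x), μ x :=
    Finset.sum_nonneg fun x _ => hμ x
  have hnnB : 0 ≤ ∑ x ∈ ℬ.filter (fun x => Hs x ≠ B x), μ x :=
    Finset.sum_nonneg fun x _ => hμ x
  have hdiff : diDI μ ℬ G₁ - diDI μ ℬ G₂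
      = (∑ x ∈ ℬᶜ.filter (fun x => Hs x ≠ B x), μ x) / a
        + (∑ x ∈ ℬ.filter (fun x => Hs x ≠ B x), μ x) / b := by
    unfold diDI
    rw [← hUA, ← hUB]
    ring
  have hge : D / M ≤ diDI μ ℬ G₁ - diDI μ ℬ G₂ := by
    rw [hdiff, hsplit, add_div]
    gcongr
    · exact le_max_left _ _
    · exact le_max_right _ _
  -- from disagreement of H to D
  have hDnn : 0 ≤ D := Finset.sum_nonneg fun x _ => hμ x
  have hhalf : D / M = D / (2 * M) + D / (2 * M) := by
    field_simp
    ring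
  have key : ∀ H : 𝒳 → Bool, accDI μ p B - ε ≤ accDI μ p H →
      (1 / (2 * M)) * (∑ x ∈ univ.filter (fun x => H x ≠ B x), μ x) ≤ D / (2 * M) := by
    intro H hH
    have h1 : (∑ x ∈ univ.filter (fun x => H x ≠ B x), μ x) ≤ D := hHsmax H hH
    have h2 : (0:ℝ) ≤ 1 / (2 * M) := by positivity
    calc (1 / (2 * M)) * (∑ x ∈ univ.filter (fun x => H x ≠ B x), μ x)
        ≤ (1 / (2 * M)) * D := mul_le_mul_of_nonneg_left h1 h2
      _ = D / (2 * M) := by rw [one_div, inv_mul_eq_div]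
  by_cases hcase : D / (2 * M) ≤ |diDI μ ℬ F - diDI μ ℬ G₁|
  · refine ⟨G₁, ?_, ?_⟩
    · show accDI μ p F - ε ≤ accDI μ p G₁
      linarith
    · intro H hH
      rw [ge_iff_le]
      show (1 / (2 * M)) * (∑ x ∈ univ.filter (fun x => H x ≠ B x), μ x)
          ≤ |diDI μ ℬ F - diDI μ ℬ G₁|
      exact le_trans (key H hH) hcase
  · refine ⟨G₂, ?_, ?_⟩
    · show accDI μ p F - ε ≤ accDI μ p G₂
      linarith
    · intro H hH
      rw [ge_iff_le]
      show (1 / (2 * M)) * (∑ x ∈ univ.filter (fun x => H x ≠ B x), μ x)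
          ≤ |diDI μ ℬ F - diDI μ ℬ G₂|
      refine le_trans (key H hH) ?_
      push_neg at hcase
      have t1 := neg_abs_le (diDI μ ℬ F - diDI μ ℬ G₁)
      have t2 := le_abs_self (diDI μ ℬ F - diDI μ ℬ G₂)
      linarith
end
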